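/- Let F be an algebraically closed field of characteristic 3. Then the F𝔖_3-module Lie_F(3) ⊗ Lie_F(3)^* (with diagonal 𝔖_3-action on the tensor product, and contragredient dual) is not isomorphic to a permutation F𝔖_3-module. In particular, Lie_F(3) is not an endo-permutation F𝔖_3-module. -/

import Mathlib

open TensorProduct

set_option synthInstance.maxHeartbeats 1000000
set_option maxHeartbeats 1000000

/-- The partial Dynkin–Specht–Wever element `(1-c_2)(1-c_3)⋯(1-c_m)` inside `F𝔖_n`,
where `c_k` is the backward cycle `(k, k-1, …, 2, 1)` of `𝔖_n` (in zero-based indexing,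
`c_k` is the inverse of `Fin.cycleRange (k-1)`). -/
noncomputable def dswPartial (F : Type*) [Field F] (n m : ℕ) :
    MonoidAlgebra F (Equiv.Perm (Fin n)) :=
  (((List.finRange n).take m).tail.map
    (fun j => (1 : MonoidAlgebra F (Equiv.Perm (Fin n))) -
      MonoidAlgebra.of F (Equiv.Perm (Fin n)) (Fin.cycleRange j)⁻¹)).prod

/-- The Dynkin–Specht–Wever element `ω_n = (1-c_2)(1-c_3)⋯(1-c_n) ∈ F𝔖_n`; `ω_1 = 1`. -/
noncomputable def dsw (F : Type*) [Field F] (n : ℕ) :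
    MonoidAlgebra F (Equiv.Perm (Fin n)) :=
  dswPartial F n n

/-- The underlying `F`-vector space of the Lie module `Lie_F(n) = F𝔖_n·ω_n`. -/
noncomputable abbrev lieSpace (F : Type*) [Field F] (n : ℕ) :=
  ↥((Submodule.span (MonoidAlgebra F (Equiv.Perm (Fin n))) {dsw F n}).restrictScalars F)

/-- The Lie module `Lie_F(n)` as a representation of `𝔖_n`: the symmetric group acts on
the left ideal `F𝔖_n·ω_n` by left multiplication. -/
noncomputable def lieRep (F : Type*) [Field F] (n : ℕ) :
    Representation F (Equiv.Perm (Fin n)) (lieSpace F n) where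
  toFun g :=
    { toFun := fun x => ⟨MonoidAlgebra.of F (Equiv.Perm (Fin n)) g *
        (x : MonoidAlgebra F (Equiv.Perm (Fin n))),
        by simpa [smul_eq_mul] using
          (Submodule.span (MonoidAlgebra F (Equiv.Perm (Fin n))) {dsw F n}).smul_mem
            (MonoidAlgebra.of F (Equiv.Perm (Fin n)) g) x.2⟩
      map_add' := by intro x y; ext; simp [mul_add]
      map_smul' := by intro c x; ext; simp [Algebra.mul_smul_comm] }
  map_one' := by ext x; simp
  map_mul' g h := by ext x; simp [mul_assoc, map_mul]

/-- The permutation `FG`-module `F[X]` attached to an action of `G` on `X` by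
permutations: the free `F`-module on `X`, with `G` permuting the basis. -/
noncomputable def permRep (F G X : Type*) [Field F] [Group G] (act : G →* Equiv.Perm X) :
    Representation F G (X →₀ F) where
  toFun g := Finsupp.lmapDomain F F (act g)
  map_one' := by ext x; simp
  map_mul' g h := by
    ext x
    simp [Finsupp.mapDomain_comp, Equiv.Perm.mul_apply]

/-- Two representations are isomorphic if there is an equivariant linear equivalence. -/
def RepIso {F G V W : Type*} [Field F] [Group G] [AddCommGroup V] [Module F V]
    [AddCommGroup W] [Module F W] (ρ : Representation F G V) (τ : Representation F G W) :
    Prop :=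
  ∃ e : V ≃ₗ[F] W, ∀ (g : G) (v : V), e (ρ g v) = τ g (e v)

/-!
`Lie_F(3)` is two-dimensional with basis `ω₃, c₃ω₃`, and `c₂ω₃ = -ω₃`,
`c₂(c₃ω₃) = ω₃ + c₃ω₃`. These relations force every endomorphism commuting with `𝔖₃` to be a
scalar, so the invariants of `End_F(Lie_F(3)) ≅ Lie_F(3) ⊗ Lie_F(3)^*` form a line. The indicator
functions of the orbits of `X` are linearly independent invariants of `F[X]`, so a permutation
module with a one-dimensional space of invariants is transitive and its dimension divides the
order of the group; but `dim End_F(Lie_F(3)) = 4` does not divide `|𝔖₃| = 6`.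
-/

open MonoidAlgebra Module Submodule

namespace RepIso

variable {F G V W U : Type*} [Field F] [Group G] [AddCommGroup V] [Module F V]
  [AddCommGroup W] [Module F W] [AddCommGroup U] [Module F U]
  {ρ : Representation F G V} {σ : Representation F G W} {τ : Representation F G U}

theorem symm (h : RepIso ρ σ) : RepIso σ ρ := by
  obtain ⟨e, he⟩ := h
  exact ⟨e.symm, fun g w => e.injective (by rw [he, e.apply_symm_apply, e.apply_symm_apply])⟩

theorem trans (h₁ : RepIso ρ σ) (h₂ : RepIso σ τ) : RepIso ρ τ := by
  obtain ⟨e₁, he₁⟩ := h₁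
  obtain ⟨e₂, he₂⟩ := h₂
  exact ⟨e₁.trans e₂, fun g v => by simp only [LinearEquiv.trans_apply, he₁, he₂]⟩

theorem finrank_invariants_eq (h : RepIso ρ σ) :
    finrank F ρ.invariants = finrank F σ.invariants := by
  obtain ⟨e, he⟩ := h
  have hmap : ρ.invariants.map (e : V →ₗ[F] W) = σ.invariants := by
    ext w
    refine ⟨?_, fun hw => ⟨e.symm w, fun g => e.injective ?_, e.apply_symm_apply w⟩⟩
    · rintro ⟨v, hv, rfl⟩ g
      simp only [LinearEquiv.coe_coe, ← he, hv g]
    · rw [he, e.apply_symm_apply, hw g]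
  rw [← hmap, LinearEquiv.finrank_map_eq]

end RepIso

theorem repIso_tprod_dual_linHom {F G V W : Type*} [Field F] [Group G] [AddCommGroup V]
    [Module F V] [FiniteDimensional F V] [AddCommGroup W] [Module F W]
    (ρ : Representation F G V) (τ : Representation F G W) :
    RepIso (τ.tprod ρ.dual) (ρ.linHom τ) := by
  refine ⟨(TensorProduct.comm F W (Dual F V)).trans (dualTensorHomEquiv F V W), fun g z => ?_⟩
  induction z using TensorProduct.induction_on with
  | zero => simp only [map_zero]
  | tmul w f => exact LinearMap.congr_fun (ρ.dualTensorHom_comm τ g) (f ⊗ₜ w)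
  | add z z' hz hz' => simp only [map_add, hz, hz']

section PermRep

variable {F G X : Type*} [Field F] [Group G]

theorem permRep_apply_apply (act : G →* Equiv.Perm X) (g : G) (v : X →₀ F) (x : X) :
    permRep F G X act g v x = v ((act g).symm x) :=
  Finsupp.mapDomain_equiv_apply v x

variable [MulAction G X]

theorem exists_notMem_orbit_of_not_dvd [Finite G] (x : X) (h : ¬ Nat.card X ∣ Nat.card G) :
    ∃ y, y ∉ MulAction.orbit G x := by
  by_contra! hall
  have horbit : MulAction.orbit G x = Set.univ := Set.eq_univ_of_forall hall
  apply h
  rw [← Set.ncard_univ, ← horbit, ← MulAction.index_stabilizer]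
  exact (MulAction.stabilizer G x).index_dvd_card

variable [Finite X]

variable (F G) in
noncomputable def orbitIndicator (x : X) : X →₀ F :=
  Finsupp.equivFunOnFinite.symm ((MulAction.orbit G x).indicator 1)

theorem orbitIndicator_apply (x y : X) [Decidable (y ∈ MulAction.orbit G x)] :
    orbitIndicator F G x y = if y ∈ MulAction.orbit G x then 1 else 0 := by
  simp [orbitIndicator, Set.indicator_apply]

theorem orbitIndicator_mem_invariants (x : X) :
    orbitIndicator F G x ∈ (permRep F G X (MulAction.toPermHom G X)).invariants := fun g => by
  classical
  ext y
  have hy : g⁻¹ • y ∈ MulAction.orbit G x ↔ y ∈ MulAction.orbit G x := by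
    rw [MulAction.mem_orbit_symm, MulAction.orbit_smul, MulAction.mem_orbit_symm]
  simp only [permRep_apply_apply, orbitIndicator_apply, MulAction.toPermHom_apply,
    MulAction.toPerm_symm_apply, hy]

theorem two_le_finrank_invariants_permRep {x y : X} (hxy : y ∉ MulAction.orbit G x) :
    2 ≤ finrank F (permRep F G X (MulAction.toPermHom G X)).invariants := by
  classical
  have hyx : x ∉ MulAction.orbit G y := MulAction.mem_orbit_symm.not.mp hxy
  have hli : LinearIndependent F ![orbitIndicator F G x, orbitIndicator F G y] := by
    refine LinearIndependent.pair_iff.mpr fun s t hst => ⟨?_, ?_⟩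
    · simpa [orbitIndicator_apply, hyx] using DFunLike.congr_fun hst x
    · simpa [orbitIndicator_apply, hxy] using DFunLike.congr_fun hst y
  calc 2 = finrank F (span F (Set.range ![orbitIndicator F G x, orbitIndicator F G y])) := by
        rw [finrank_span_eq_card hli, Fintype.card_fin]
    _ ≤ _ := by
        refine Submodule.finrank_mono (span_le.mpr ?_)
        rintro _ ⟨i, rfl⟩
        fin_cases i <;> exact orbitIndicator_mem_invariants _

end PermRep

theorem not_repIso_permRep_of_finrank_invariants_le_one {F G V X : Type*} [Field F] [Group G]
    [Finite G] [AddCommGroup V] [Module F V] [Finite X] (σ : Representation F G V)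
    (hV : finrank F V ≠ 0) (hdvd : ¬ finrank F V ∣ Nat.card G)
    (hinv : finrank F σ.invariants ≤ 1) (act : G →* Equiv.Perm X) :
    ¬ RepIso σ (permRep F G X act) := by
  intro h
  let _ := MulAction.compHom X act
  have hX : Nat.card X = finrank F V := by
    have := Fintype.ofFinite X
    obtain ⟨e, -⟩ := h
    rw [e.finrank_eq, finrank_finsupp_self, Nat.card_eq_fintype_card]
  obtain ⟨x⟩ : Nonempty X := (Nat.card_ne_zero.mp (hX ▸ hV)).1
  obtain ⟨y, hy⟩ := exists_notMem_orbit_of_not_dvd x (hX ▸ hdvd)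
  -- for the action `compHom X act`, `MulAction.toPermHom G X` unfolds to `act`
  have h₂ : 2 ≤ finrank F (permRep F G X act).invariants := two_le_finrank_invariants_permRep hy
  have h₁ := h.finrank_invariants_eq
  omega

theorem Module.End.exists_eq_smul_one_of_commute {R V : Type*} [CommRing R] [AddCommGroup V]
    [Module R V] {v₁ v₂ : V} (hli : LinearIndependent R ![v₁, v₂]) (hsp : ⊤ ≤ span R {v₁, v₂})
    {s r f : Module.End R V} (hs₁ : s v₁ = -v₁) (hs₂ : s v₂ = v₁ + v₂) (hr : r v₁ = v₂)
    (hfs : Commute f s) (hfr : Commute f r) : ∃ a : R, f = a • 1 := by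
  obtain ⟨a, b, hab⟩ := mem_span_pair.mp (hsp (mem_top (x := f v₁)))
  have hb : b = 0 := by
    have h := LinearMap.congr_fun hfs.eq v₁
    rw [Module.End.mul_apply, Module.End.mul_apply, hs₁, map_neg, ← hab, map_add, map_smul,
      map_smul, hs₁, hs₂] at h
    have h' : b • v₁ + (2 * b) • v₂ = 0 := by linear_combination (norm := module) (-1 : R) • h
    exact (LinearIndependent.pair_iff.mp hli _ _ h').1
  have hf₁ : f v₁ = a • v₁ := by rw [← hab, hb, zero_smul, add_zero]
  have hf₂ : f v₂ = a • v₂ := by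
    rw [← hr, ← Module.End.mul_apply, hfr.eq, Module.End.mul_apply, hf₁, map_smul]
  refine ⟨a, LinearMap.ext_on (s := {v₁, v₂}) (top_unique hsp) ?_⟩
  rintro _ (rfl | rfl)
  · simpa using hf₁
  · simpa using hf₂

local notation "𝔖₃" => Equiv.Perm (Fin 3)

namespace Lie3

def c₂ : 𝔖₃ := (Fin.cycleRange 1)⁻¹
def c₃ : 𝔖₃ := (Fin.cycleRange 2)⁻¹

theorem perm_fin_three_cases (g : 𝔖₃) :
    g = 1 ∨ g = c₂ ∨ g = c₃ ∨ g = c₂ * c₃ ∨ g = c₃ * c₂ ∨ g = c₂ * c₃ * c₂ := by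
  revert g
  decide

variable (F : Type*) [Field F]

theorem dsw_eq : dsw F 3 = (1 - of F 𝔖₃ c₂) * (1 - of F 𝔖₃ c₃) := by
  rw [dsw, dswPartial, show ((List.finRange 3).take 3).tail = [1, 2] by decide]
  simp [c₂, c₃]

theorem of_c₂_mul_dsw : of F 𝔖₃ c₂ * dsw F 3 = -dsw F 3 := by
  rw [dsw_eq, ← mul_assoc, mul_sub (of F 𝔖₃ c₂), mul_one, ← map_mul,
    show c₂ * c₂ = 1 by decide, map_one, ← neg_sub, neg_mul]

theorem of_c₂_mul_of_c₃_mul_dsw :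
    of F 𝔖₃ c₂ * (of F 𝔖₃ c₃ * dsw F 3) = dsw F 3 + of F 𝔖₃ c₃ * dsw F 3 := by
  simp only [dsw_eq, mul_sub, sub_mul, mul_one, one_mul, ← map_mul, ← mul_assoc,
    show c₂ * c₃ * c₂ = c₃ * c₃ by decide, show c₂ * c₃ * c₃ = c₃ * c₂ by decide,
    show c₂ * c₂ = 1 by decide, show c₃ * c₂ * c₃ = c₂ by decide]
  abel

theorem linearIndependent_dsw : LinearIndependent F ![dsw F 3, of F 𝔖₃ c₃ * dsw F 3] := by
  refine LinearIndependent.pair_iff.mpr fun s t hst => ?_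
  have hs : s = 0 := by
    simpa +decide [dsw_eq, mul_sub, sub_mul, of_apply, c₂, c₃] using congr(($hst).coeff 1)
  refine ⟨hs, ?_⟩
  simpa +decide [dsw_eq, mul_sub, sub_mul, of_apply, c₂, c₃, hs] using congr(($hst).coeff c₃)

theorem of_mul_dsw_mem_span (g : 𝔖₃) :
    of F 𝔖₃ g * dsw F 3 ∈ span F {dsw F 3, of F 𝔖₃ c₃ * dsw F 3} := by
  rw [mem_span_pair]
  rcases perm_fin_three_cases g with rfl | rfl | rfl | rfl | rfl | rfl
  · exact ⟨1, 0, by rw [map_one, one_mul]; module⟩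
  · exact ⟨-1, 0, by rw [of_c₂_mul_dsw]; module⟩
  · exact ⟨0, 1, by module⟩
  · exact ⟨1, 1, by rw [map_mul, mul_assoc, of_c₂_mul_of_c₃_mul_dsw]; module⟩
  · exact ⟨0, -1, by rw [map_mul, mul_assoc, of_c₂_mul_dsw, mul_neg]; module⟩
  · refine ⟨-1, -1, ?_⟩
    rw [map_mul, map_mul, mul_assoc, mul_assoc, of_c₂_mul_dsw, mul_neg, mul_neg,
      of_c₂_mul_of_c₃_mul_dsw]
    module

theorem mul_dsw_mem_span (x : MonoidAlgebra F 𝔖₃) :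
    x * dsw F 3 ∈ span F {dsw F 3, of F 𝔖₃ c₃ * dsw F 3} := by
  induction x using MonoidAlgebra.induction_linear with
  | zero => simp
  | add x y hx hy => rw [add_mul]; exact add_mem hx hy
  | single g a => rw [← smul_of, smul_mul_assoc]; exact smul_mem _ a (of_mul_dsw_mem_span F g)

noncomputable def lieGen : lieSpace F 3 := ⟨dsw F 3, mem_span_singleton_self _⟩

theorem lieRep_c₂_lieGen : lieRep F 3 c₂ (lieGen F) = -lieGen F :=
  Subtype.ext (of_c₂_mul_dsw F)

theorem lieRep_c₂_lieRep_c₃_lieGen :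
    lieRep F 3 c₂ (lieRep F 3 c₃ (lieGen F)) = lieGen F + lieRep F 3 c₃ (lieGen F) :=
  Subtype.ext (of_c₂_mul_of_c₃_mul_dsw F)

theorem linearIndependent_lieGen :
    LinearIndependent F ![lieGen F, lieRep F 3 c₃ (lieGen F)] := by
  refine LinearIndependent.of_comp (Submodule.subtype _) ?_
  convert linearIndependent_dsw F using 1
  ext i : 1
  fin_cases i <;> rfl

theorem top_le_span_lieGen : ⊤ ≤ span F {lieGen F, lieRep F 3 c₃ (lieGen F)} := by
  rintro ⟨_, hx⟩ -
  obtain ⟨y, rfl⟩ := mem_span_singleton.mp hx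
  obtain ⟨a, b, hab⟩ := mem_span_pair.mp (mul_dsw_mem_span F y)
  exact mem_span_pair.mpr ⟨a, b, Subtype.ext hab⟩

noncomputable def lieBasis : Basis (Fin 2) F (lieSpace F 3) :=
  .mk (linearIndependent_lieGen F)
    (by rw [Matrix.range_cons_cons_empty]; exact top_le_span_lieGen F)

instance : FiniteDimensional F (lieSpace F 3) := .of_basis (lieBasis F)

theorem finrank_lieSpace : finrank F (lieSpace F 3) = 2 := by
  simp [finrank_eq_card_basis (lieBasis F)]

-- `(V := _)` makes `invariants` see the `AddCommGroup` structure on `Module.End`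
theorem finrank_invariants_linHom_le_one :
    finrank F (Representation.invariants (V := Module.End F (lieSpace F 3))
      ((lieRep F 3).linHom (lieRep F 3))) ≤ 1 := by
  have hle : Representation.invariants (V := Module.End F (lieSpace F 3))
      ((lieRep F 3).linHom (lieRep F 3)) ≤ F ∙ 1 := by
    intro f hf
    have hf := (Representation.mem_linHom_invariants_iff_isIntertwining f).mp hf
    obtain ⟨a, rfl⟩ := Module.End.exists_eq_smul_one_of_commute (linearIndependent_lieGen F)
      (top_le_span_lieGen F) (lieRep_c₂_lieGen F) (lieRep_c₂_lieRep_c₃_lieGen F) rfl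
      (LinearMap.ext (hf.isIntertwining c₂)) (LinearMap.ext (hf.isIntertwining c₃))
    exact smul_mem _ a (mem_span_singleton_self 1)
  exact (Submodule.finrank_mono hle).trans
    (by simpa using finrank_span_le_card {(1 : Module.End F (lieSpace F 3))})

end Lie3

theorem lie3_not_endo_permutation_general (F : Type*) [Field F] :
    (¬ ∃ (X : Type) (_ : Finite X) (act : Equiv.Perm (Fin 3) →* Equiv.Perm X),
        RepIso (V := lieSpace F 3 ⊗[F] Module.Dual F (lieSpace F 3))
          ((lieRep F 3).tprod (lieRep F 3).dual) (permRep F (Equiv.Perm (Fin 3)) X act)) ∧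
    (¬ ∃ (X : Type) (_ : Finite X) (act : Equiv.Perm (Fin 3) →* Equiv.Perm X),
        RepIso (V := lieSpace F 3 →ₗ[F] lieSpace F 3) ((lieRep F 3).linHom (lieRep F 3)) (permRep F (Equiv.Perm (Fin 3)) X act)) := by
  have hEnd : ¬ ∃ (X : Type) (_ : Finite X) (act : Equiv.Perm (Fin 3) →* Equiv.Perm X),
      RepIso (V := lieSpace F 3 →ₗ[F] lieSpace F 3) ((lieRep F 3).linHom (lieRep F 3))
        (permRep F (Equiv.Perm (Fin 3)) X act) := by
    rintro ⟨X, _, act, h⟩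
    refine not_repIso_permRep_of_finrank_invariants_le_one _ ?_ ?_
      (Lie3.finrank_invariants_linHom_le_one F) act h <;>
    · simp only [finrank_linearMap, Lie3.finrank_lieSpace, Nat.card_perm, Nat.card_fin]
      decide
  exact ⟨fun ⟨X, hX, act, h⟩ => hEnd ⟨X, hX, act, (repIso_tprod_dual_linHom _ _).symm.trans h⟩,
    hEnd⟩

/-- Let `F` be an algebraically closed field of characteristic 3. Then the
`F𝔖_3`-module `Lie_F(3) ⊗ Lie_F(3)^*` (with diagonal `𝔖_3`-action and contragredient
dual) is not isomorphic to a permutation `F𝔖_3`-module. In particular (since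
`End_F(Lie_F(3)) ≅ Lie_F(3) ⊗ Lie_F(3)^*`), `Lie_F(3)` is not an endo-permutation
`F𝔖_3`-module. -/
theorem lie3_not_endo_permutation (F : Type*) [Field F] [IsAlgClosed F] [CharP F 3] :
    (¬ ∃ (X : Type) (_ : Finite X) (act : Equiv.Perm (Fin 3) →* Equiv.Perm X),
        RepIso (V := lieSpace F 3 ⊗[F] Module.Dual F (lieSpace F 3))
          ((lieRep F 3).tprod (lieRep F 3).dual) (permRep F (Equiv.Perm (Fin 3)) X act)) ∧
    (¬ ∃ (X : Type) (_ : Finite X) (act : Equiv.Perm (Fin 3) →* Equiv.Perm X),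
        RepIso (V := lieSpace F 3 →ₗ[F] lieSpace F 3) ((lieRep F 3).linHom (lieRep F 3)) (permRep F (Equiv.Perm (Fin 3)) X act)) :=
  lie3_not_endo_permutation_general F
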